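/- arXiv:1808.00296 — 4 statements merged into one kernel-verified Lean document; each statement's English description precedes it below -/
import Mathlib

section
/- Let u_1,...,u_K : Δ(Z) → ℝ be affine functionals on lotteries over a finite set Z such that no u_k is a positive affine transformation of any u_l for k ≠ l, and each u_k is non-constant. Then there exist lotteries p_1,...,p_K ∈ Δ(Z) with u_k(p_k) > u_k(p_l) for all distinct k,l. (Separation property for lotteries.) -/
open Finset RealInnerProductSpace

/-!
Center each utility `u k` and normalize it to a unit vector `w k` of `EuclideanSpace ℝ Z`; it lies
in the zero-sum hyperplane, so `p k = (1 + w k) / |Z|` is a lottery. Up to the constant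
`∑ z, u k z / |Z|`, the expected utility of `p l` under `u k` is `⟪w l, centered (u k)⟫ / |Z|`, and by
Cauchy–Schwarz this is largest, strictly, at `l = k`: equality would make `centered (u k)` a
positive multiple of `centered (u l)`, i.e. `u k` a positive affine transformation of `u l`.
-/

section InnerProduct

variable {F : Type*} [NormedAddCommGroup F] [InnerProductSpace ℝ F]

theorem real_inner_inv_norm_smul_lt_norm {x y : F} (hx : x ≠ 0)
    (h : ¬ ∃ r : ℝ, 0 < r ∧ x = r • y) : ⟪‖y‖⁻¹ • y, x⟫ < ‖x‖ := by
  rcases eq_or_ne y 0 with rfl | hy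
  · simpa using hx
  have hy' : 0 < ‖y‖ := norm_pos_iff.2 hy
  rw [real_inner_smul_left, inv_mul_lt_iff₀ hy', inner_lt_norm_mul_iff_real]
  intro hxy
  refine h ⟨‖x‖ / ‖y‖, div_pos (norm_pos_iff.2 hx) hy', ?_⟩
  rw [div_eq_inv_mul, mul_smul, hxy, inv_smul_smul₀ hy'.ne']

theorem real_inner_inv_norm_smul_self (x : F) : ⟪‖x‖⁻¹ • x, x⟫ = ‖x‖ := by
  rcases eq_or_ne x 0 with rfl | hx
  · simp
  rw [real_inner_smul_left, real_inner_self_eq_norm_sq, sq,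
    inv_mul_cancel_left₀ (norm_ne_zero_iff.2 hx)]

end InnerProduct

namespace Lottery

noncomputable section

variable {Z : Type*} [Fintype Z]

def centered (f : Z → ℝ) : Z → ℝ := fun z => f z - (∑ z', f z') / Fintype.card Z

theorem sum_centered [Nonempty Z] (f : Z → ℝ) : ∑ z, centered f z = 0 := by
  simp only [centered, sum_sub_distrib, sum_const, card_univ, nsmul_eq_mul]
  field_simp
  ring

theorem centered_ne_zero {f : Z → ℝ} (hf : ∃ z z', f z ≠ f z') : centered f ≠ 0 := by
  obtain ⟨z, z', hzz'⟩ := hf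
  intro h
  have hz := congrFun h z
  have hz' := congrFun h z'
  simp only [centered, Pi.zero_apply, sub_eq_zero] at hz hz'
  exact hzz' (hz.trans hz'.symm)

theorem exists_eq_mul_add_of_centered_eq_smul {f g : Z → ℝ} {r : ℝ}
    (h : centered f = r • centered g) : ∃ b : ℝ, ∀ z, f z = r * g z + b := by
  refine ⟨(∑ z, f z) / Fintype.card Z - r * ((∑ z, g z) / Fintype.card Z), fun z => ?_⟩
  have hz := congrFun h z
  simp only [centered, Pi.smul_apply, smul_eq_mul] at hz
  linarith

theorem sum_mul_centered {w : Z → ℝ} (hw : ∑ z, w z = 0) (f : Z → ℝ) :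
    ∑ z, w z * centered f z = ∑ z, w z * f z := by
  simp only [centered, mul_sub, sum_sub_distrib, ← sum_mul, hw, zero_mul, sub_zero]

def perturbUniform (w : Z → ℝ) : Z → ℝ := fun z => (1 + w z) / Fintype.card Z

variable {w : Z → ℝ}

theorem perturbUniform_nonneg {z : Z} (hw : -1 ≤ w z) : 0 ≤ perturbUniform w z :=
  div_nonneg (by linarith) (Nat.cast_nonneg _)

theorem sum_perturbUniform [Nonempty Z] (hw : ∑ z, w z = 0) : ∑ z, perturbUniform w z = 1 := by
  simp only [perturbUniform, ← sum_div, sum_add_distrib, hw, sum_const, card_univ, nsmul_eq_mul]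
  field_simp
  ring

theorem sum_perturbUniform_mul (w f : Z → ℝ) :
    ∑ z, perturbUniform w z * f z = (∑ z, f z + ∑ z, w z * f z) / Fintype.card Z := by
  simp only [perturbUniform, div_mul_eq_mul_div, ← sum_div, add_mul, one_mul, sum_add_distrib]

theorem sum_perturbUniform_mul_lt_iff [Nonempty Z] (w w' f : Z → ℝ) :
    ∑ z, perturbUniform w z * f z < ∑ z, perturbUniform w' z * f z ↔
      ∑ z, w z * f z < ∑ z, w' z * f z := by
  rw [sum_perturbUniform_mul, sum_perturbUniform_mul,
    div_lt_div_iff_of_pos_right (by exact_mod_cast Fintype.card_pos), add_lt_add_iff_left]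

-- For constant `f` this is `0`, since `‖0‖⁻¹ = 0`.
def direction (f : Z → ℝ) : EuclideanSpace ℝ Z :=
  ‖WithLp.toLp 2 (centered f)‖⁻¹ • WithLp.toLp 2 (centered f)

theorem sum_direction [Nonempty Z] (f : Z → ℝ) : ∑ z, direction f z = 0 := by
  simp [direction, ← mul_sum, sum_centered]

theorem neg_one_le_direction (f : Z → ℝ) (z : Z) : -1 ≤ direction f z := by
  have hnorm : ‖direction f‖ ≤ 1 := by
    rcases eq_or_ne (WithLp.toLp 2 (centered f)) 0 with h | h
    · simp [direction, h]
    · exact (norm_smul_inv_norm h).le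
  have habs := (Real.norm_eq_abs _ ▸ PiLp.norm_apply_le (direction f) z).trans hnorm
  exact (abs_le.1 habs).1

theorem sum_direction_mul [Nonempty Z] (g f : Z → ℝ) :
    ∑ z, direction g z * f z = ⟪direction g, WithLp.toLp 2 (centered f)⟫ := by
  rw [← sum_mul_centered (sum_direction g)]
  simp [PiLp.inner_apply, mul_comm]

theorem sum_direction_mul_lt [Nonempty Z] {f g : Z → ℝ} (hf : ∃ z z', f z ≠ f z')
    (hfg : ¬ ∃ a : ℝ, 0 < a ∧ ∃ b : ℝ, ∀ z, f z = a * g z + b) :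
    ∑ z, direction g z * f z < ∑ z, direction f z * f z := by
  have hx : WithLp.toLp 2 (centered f) ≠ 0 := by
    simpa using centered_ne_zero hf
  rw [sum_direction_mul, sum_direction_mul, direction, direction, real_inner_inv_norm_smul_self]
  refine real_inner_inv_norm_smul_lt_norm hx fun ⟨r, hr, hxy⟩ => hfg ⟨r, hr, ?_⟩
  exact exists_eq_mul_add_of_centered_eq_smul (WithLp.toLp_injective 2 (by simpa using hxy))

end

end Lottery

open Lottery in
/-- Separation property for lotteries: given expected-utility functionals on `Δ(Z)`
(represented by Bernoulli utilities `u k : Z → ℝ`), each non-constant and no two of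
which are positive affine transformations of one another, there are lotteries `p_k`
with `u_k(p_k) > u_k(p_l)` for all distinct `k, l`. -/
theorem separation_property_for_lotteries
    {Z : Type*} [Fintype Z] (K : ℕ) (u : Fin K → Z → ℝ)
    (hnc : ∀ k, ∃ z z' : Z, u k z ≠ u k z')
    (hdist : ∀ k l, k ≠ l →
      ¬ ∃ a : ℝ, 0 < a ∧ ∃ b : ℝ, ∀ z, u k z = a * u l z + b) :
    ∃ p : Fin K → Z → ℝ,
      (∀ k, (∀ z, 0 ≤ p k z) ∧ (∑ z, p k z) = 1) ∧
      ∀ k l, k ≠ l → (∑ z, p l z * u k z) < (∑ z, p k z * u k z) := by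
  have hZ : ∀ k, Nonempty Z := fun k => let ⟨z, _⟩ := hnc k; ⟨z⟩
  refine ⟨fun k => perturbUniform (direction (u k)), fun k => ⟨?_, ?_⟩, fun k l hkl => ?_⟩
  · exact fun z => perturbUniform_nonneg (neg_one_le_direction _ z)
  · have : Nonempty Z := hZ k
    exact sum_perturbUniform (sum_direction _)
  · have : Nonempty Z := hZ k
    rw [sum_perturbUniform_mul_lt_iff]
    exact sum_direction_mul_lt (hnc k) (hdist k l hkl)
end

section
/- Let SubS be a finite set of SEU pairs (q,u) with q ∈ Δ(S), S finite, let ψ be a probability measure on SubS with full support, and suppose that for each menu A and act f ∈ A, ρ(f,A,s) = Σ_{(q,u)} ψ^s(q,u)·ρ(s)·τ_{q,u}(f,A) where ρ(s) > 0 and Σ_s ψ^s(q,u)ρ(s) = ψ(q,u). If for a separating menu Ā = {f(q,u) : (q,u) ∈ SubS} (i.e., a menu where f(q,u) is the unique maximizer of (q,u) in Ā) the conditional law satisfies ρ(·|f(q,u),Ā) = q(·) for every (q,u) ∈ SubS, then ρ(s) = Σ_{(q,u)} ψ(q,u)·q(s) for all s, and ψ^s(q,u) = q(s)ψ(q,u)/ρ(s)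 for all (q,u) and s. (Property (P) pins down the correct-interim-beliefs representation.) -/
open Finset

/-- Property (P) pins down the correct-interim-beliefs representation: if at a
separating menu `Ā = {f(q,u)}` the conditional law of the objective state given the
choice `f(q,u)` equals the belief `q`, then `ρ(s) = Σ_{(q,u)} ψ(q,u)q(s)` and
`ψ^s(q,u) = q(s)ψ(q,u)/ρ(s)`. -/
theorem property_P_pins_down_CIB
    {X S F : Type*} [Fintype X] [Fintype S] [DecidableEq X]
    (ψ : X → ℝ) (ψs : S → X → ℝ) (ρS : S → ℝ) (q : X → S → ℝ)
    (τ : X → F → Finset F → ℝ) (ρ : F → Finset F → S → ℝ)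
    (hψpos : ∀ x, 0 < ψ x) (hψ1 : ∑ x, ψ x = 1)
    (hψs0 : ∀ s x, 0 ≤ ψs s x) (hψs1 : ∀ s, ∑ x, ψs s x = 1)
    (hρS : ∀ s, 0 < ρS s)
    (hmix : ∀ x, (∑ s, ψs s x * ρS s) = ψ x)
    (hrep : ∀ f (A : Finset F) s, f ∈ A → ρ f A s = ∑ x, ψs s x * ρS s * τ x f A)
    -- the separating menu Ā
    (Abar : Finset F) (fbar : X → F)
    (hinj : Function.Injective fbar) (hmem : ∀ x, fbar x ∈ Abar)
    (hsep : ∀ x y : X, τ x (fbar y) Abar = if x = y then 1 else 0)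
    -- property (P): conditional law of s given the choice (f(q,u), Ā) equals q
    (hP : ∀ x s, ρ (fbar x) Abar s / (∑ s', ρ (fbar x) Abar s') = q x s) :
    (∀ s, ρS s = ∑ x, ψ x * q x s) ∧
    (∀ x s, ψs s x = q x s * ψ x / ρS s) := by
  have hρval : ∀ x s, ρ (fbar x) Abar s = ψs s x * ρS s := by
    intro x s
    rw [hrep _ _ _ (hmem x)]
    rw [Finset.sum_eq_single x]
    · rw [hsep x x]; simp
    · intro b _ hb; rw [hsep b x, if_neg hb, mul_zero]
    · intro h; exact absurd (Finset.mem_univ x) h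
  have hsum : ∀ x, (∑ s', ρ (fbar x) Abar s') = ψ x := by
    intro x
    simp only [hρval]
    exact hmix x
  have hkey : ∀ x s, ψs s x * ρS s = q x s * ψ x := by
    intro x s
    have := hP x s
    rw [hρval, hsum] at this
    field_simp [(hψpos x).ne'] at this ⊢
    linarith [this]
  constructor
  · intro s
    have : ∑ x, ψ x * q x s = ∑ x, ψs s x * ρS s := by
      apply Finset.sum_congr rfl
      intro x _; rw [hkey x s]; ring
    rw [this, ← Finset.sum_mul, hψs1 s, one_mul]
  · intro x s
    rw [← hkey x s]
    field_simp [(hρS s).ne']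
end

section
/- If an aSCF ρ admits two AS-version R-SEU representations with correct interim beliefs, given by (SubS, μ, {τ_{q,u}}) and (SubS', μ', {τ'_{q,u}}) with SubS, SubS' finite sets of pairwise distinct non-constant SEUs, then there is a bijection φ : SubS → SubS' with φ(q,u) = (q, a·u + b) for some a > 0, b ∈ ℝ (depending on (q,u)), and μ(q,u,s) = μ'(φ(q,u),s) for all s ∈ S. (Essential uniqueness of the static R-SEU representation.) -/
/-!
Put the SEUs of both representations side by side. On a finite set `T` of prizes that witnesses
every non-constant Bernoulli utility and every failure of a positive affine relation between two
of them, an SEU `(q, u)` is encoded by the unit vector `q̂ ⊗ ŵ ∈ ℝ^(S × T)`, with `q̂ = q / ‖q‖`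
and `ŵ` the centred, normalised restriction of the Bernoulli utility to `T`. The act `f_(q,u)`
perturbing the uniform lottery on `T` in that direction is worth `α + β ⟨q̂ ⊗ ŵ, q̂' ⊗ ŵ'⟩`,
`β > 0`, to `(q, u)`, so by Cauchy–Schwarz every SEU strictly prefers its own act in the menu `A`
of all these acts, and two acts coincide only for equivalent SEUs. A regular tie-breaker then
chooses the own act with probability one, so `ρ(f_x, A, s) = μ(x, s)` in each representation;
full support forces each act of one representation to be an act of the other, which yields the
bijection and the equality of the two measures.
-/

open Finset

def IsLottery {Z : Type*} (p : Z →₀ ℝ) : Prop :=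
  (∀ z, 0 ≤ p z) ∧ p.sum (fun _ x => x) = 1

def IsAffineOnLotteries {Z : Type*} (u : (Z →₀ ℝ) → ℝ) : Prop :=
  ∀ p q : Z →₀ ℝ, IsLottery p → IsLottery q → ∀ a : ℝ, 0 ≤ a → a ≤ 1 →
    u (a • p + (1 - a) • q) = a * u p + (1 - a) * u q

def IsPosAffineOn {α : Type*} (T : Set α) (f g : α → ℝ) : Prop :=
  ∃ a : ℝ, 0 < a ∧ ∃ b : ℝ, ∀ x ∈ T, f x = a * g x + b

theorem IsPosAffineOn.mono {α : Type*} {T T' : Set α} {f g : α → ℝ}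
    (h : IsPosAffineOn T' f g) (hT : T ⊆ T') : IsPosAffineOn T f g :=
  let ⟨a, ha, b, hab⟩ := h
  ⟨a, ha, b, fun x hx => hab x (hT hx)⟩

section Lottery

variable {Z : Type*}

theorem IsLottery.sum_eq_one {p : Z →₀ ℝ} (hp : IsLottery p) {T : Finset Z}
    (hT : p.support ⊆ T) : ∑ z ∈ T, p z = 1 := by
  rw [← hp.2, Finsupp.sum_of_support_subset p hT _ fun _ _ => rfl]

theorem isLottery_of_support_subset {p : Z →₀ ℝ} {T : Finset Z} (hT : p.support ⊆ T)
    (h0 : ∀ z, 0 ≤ p z) (h1 : ∑ z ∈ T, p z = 1) : IsLottery p :=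
  ⟨h0, by rw [Finsupp.sum_of_support_subset p hT _ fun _ _ => rfl, h1]⟩

theorem convex_setOf_isLottery : Convex ℝ {p : Z →₀ ℝ | IsLottery p} := by
  intro p hp p' hp' a b ha hb hab
  refine ⟨fun z => ?_, ?_⟩
  · simpa using add_nonneg (mul_nonneg ha (hp.1 z)) (mul_nonneg hb (hp'.1 z))
  · rw [Finsupp.sum_add_index' (fun _ => rfl) (fun _ _ _ => rfl),
      Finsupp.sum_smul_index (fun _ => rfl), Finsupp.sum_smul_index (fun _ => rfl),
      ← Finsupp.mul_sum, ← Finsupp.mul_sum, hp.2, hp'.2, mul_one, mul_one, hab]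

theorem isLottery_single (z : Z) : IsLottery (Finsupp.single z (1 : ℝ)) :=
  isLottery_of_support_subset Finsupp.support_single_subset
    (fun z' => by classical rw [Finsupp.single_apply]; split_ifs <;> norm_num) (by simp)

noncomputable def seu {S : Type*} [Fintype S] (q : S → ℝ) (u : (Z →₀ ℝ) → ℝ)
    (f : S → Z →₀ ℝ) : ℝ :=
  ∑ s, q s * u (f s)

noncomputable def prizeUtility (u : (Z →₀ ℝ) → ℝ) (z : Z) : ℝ := u (Finsupp.single z 1)

namespace IsAffineOnLotteries

variable {u : (Z →₀ ℝ) → ℝ}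

theorem convexOn (hu : IsAffineOnLotteries u) : ConvexOn ℝ {p | IsLottery p} u := by
  refine ⟨convex_setOf_isLottery, fun p hp p' hp' a b ha hb hab => ?_⟩
  obtain rfl : b = 1 - a := by linarith
  exact (hu p p' hp hp' a ha (by linarith)).le

theorem concaveOn (hu : IsAffineOnLotteries u) : ConcaveOn ℝ {p | IsLottery p} u := by
  refine ⟨convex_setOf_isLottery, fun p hp p' hp' a b ha hb hab => ?_⟩
  obtain rfl : b = 1 - a := by linarith
  exact (hu p p' hp hp' a ha (by linarith)).ge

-- `u` is both convex and concave on lotteries, so Jensen's inequality is an equality.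
theorem apply_eq_sum (hu : IsAffineOnLotteries u) {p : Z →₀ ℝ} (hp : IsLottery p)
    {T : Finset Z} (hT : p.support ⊆ T) : u p = ∑ z ∈ T, p z * prizeUtility u z := by
  have hsum : ∑ z ∈ T, p z • Finsupp.single z (1 : ℝ) = p := by
    simp_rw [Finsupp.smul_single_one]
    rw [← Finsupp.sum_of_support_subset p hT _ fun _ _ => Finsupp.single_zero _]
    exact Finsupp.sum_single p
  have h₀ : ∀ z ∈ T, 0 ≤ p z := fun z _ => hp.1 z
  have hmem : ∀ z ∈ T, Finsupp.single z (1 : ℝ) ∈ {p | IsLottery p} :=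
    fun z _ => isLottery_single z
  conv_lhs => rw [← hsum]
  simp_rw [← smul_eq_mul]
  exact le_antisymm (hu.convexOn.map_sum_le h₀ (hp.sum_eq_one hT) hmem)
    (hu.concaveOn.le_map_sum h₀ (hp.sum_eq_one hT) hmem)

theorem isPosAffineOn_of_prizeUtility (hu : IsAffineOnLotteries u) {u' : (Z →₀ ℝ) → ℝ}
    (hu' : IsAffineOnLotteries u')
    (h : IsPosAffineOn Set.univ (prizeUtility u) (prizeUtility u')) :
    IsPosAffineOn {p | IsLottery p} u u' := by
  obtain ⟨a, ha, b, hab⟩ := h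
  refine ⟨a, ha, b, fun p (hp : IsLottery p) => ?_⟩
  rw [hu.apply_eq_sum hp subset_rfl, hu'.apply_eq_sum hp subset_rfl]
  calc ∑ z ∈ p.support, p z * prizeUtility u z
      = ∑ z ∈ p.support, (a * (p z * prizeUtility u' z) + b * p z) :=
        sum_congr rfl fun z _ => by rw [hab z trivial]; ring
    _ = _ := by rw [sum_add_distrib, ← mul_sum, ← mul_sum, hp.sum_eq_one subset_rfl, mul_one]

theorem exists_prizeUtility_ne (hu : IsAffineOnLotteries u)
    (h : ∃ p p', IsLottery p ∧ IsLottery p' ∧ u p ≠ u p') :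
    ∃ z z', prizeUtility u z ≠ prizeUtility u z' := by
  obtain ⟨p, p', hp, hp', hne⟩ := h
  by_contra! hconst
  obtain ⟨z₀, -⟩ : p.support.Nonempty := by
    by_contra! hempty
    simpa [hempty] using hp.sum_eq_one subset_rfl
  have hval : ∀ r, IsLottery r → u r = prizeUtility u z₀ := fun r hr => by
    rw [hu.apply_eq_sum hr subset_rfl]
    simp_rw [hconst _ z₀]
    rw [← sum_mul, hr.sum_eq_one subset_rfl, one_mul]
  exact hne (by rw [hval p hp, hval p' hp'])

end IsAffineOnLotteries

end Lottery

section TestSet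

variable {α : Type*}

theorem exists_finset_isPosAffineOn_imp (f g : α → ℝ) (hg : ∃ x y, g x ≠ g y) :
    ∃ T : Finset α, IsPosAffineOn T f g → IsPosAffineOn Set.univ f g := by
  classical
  by_cases hglobal : IsPosAffineOn Set.univ f g
  · exact ⟨∅, fun _ => hglobal⟩
  obtain ⟨x, y, hxy⟩ := hg
  have hxy' : g x - g y ≠ 0 := sub_ne_zero.mpr hxy
  set a₀ := (f x - f y) / (g x - g y)
  set b₀ := f x - a₀ * g x
  have hforced : ∀ a b, f x = a * g x + b → f y = a * g y + b → a = a₀ ∧ b = b₀ := by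
    intro a b hx hy
    have ha : a = a₀ := by rw [eq_div_iff hxy', hx, hy]; ring
    exact ⟨ha, by simp only [b₀, ← ha, hx]; ring⟩
  by_cases ha₀ : 0 < a₀
  · obtain ⟨z, hz⟩ : ∃ z, f z ≠ a₀ * g z + b₀ := by
      by_contra! hz
      exact hglobal ⟨a₀, ha₀, b₀, fun z _ => hz z⟩
    refine ⟨{x, y, z}, fun ⟨a, _, b, hab⟩ => (hz ?_).elim⟩
    obtain ⟨rfl, rfl⟩ := hforced a b (hab x (by simp)) (hab y (by simp))
    exact hab z (by simp)
  · refine ⟨{x, y}, fun ⟨a, ha, b, hab⟩ => (ha₀ ?_).elim⟩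
    obtain ⟨rfl, -⟩ := hforced a b (hab x (by simp)) (hab y (by simp))
    exact ha

theorem exists_finset_forall_isPosAffineOn_imp {ι : Type*} [Fintype ι] (w : ι → α → ℝ)
    (hw : ∀ i, ∃ x y, w i x ≠ w i y) :
    ∃ T : Finset α, (∀ i, ∃ x ∈ T, ∃ y ∈ T, w i x ≠ w i y) ∧
      ∀ i j, IsPosAffineOn T (w i) (w j) → IsPosAffineOn Set.univ (w i) (w j) := by
  classical
  choose T hT using fun i j => exists_finset_isPosAffineOn_imp (w i) (w j) (hw j)
  choose x y hxy using hw
  refine ⟨univ.biUnion (fun i => {x i, y i}) ∪ univ.biUnion (fun ij : ι × ι => T ij.1 ij.2),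
    fun i => ⟨x i, ?_, y i, ?_, hxy i⟩, fun i j h => hT i j (h.mono ?_)⟩
  · exact mem_union_left _ (mem_biUnion.mpr ⟨i, mem_univ _, by simp⟩)
  · exact mem_union_left _ (mem_biUnion.mpr ⟨i, mem_univ _, by simp⟩)
  · intro z hz
    exact mem_union_right _ (mem_biUnion.mpr ⟨(i, j), mem_univ _, hz⟩)

end TestSet

section Normalize

variable {α : Type*} (T : Finset α)

-- `0` when `v` vanishes on `T` (division by `√0 = 0`).
noncomputable def l2Normalize (v : α → ℝ) (x : α) : ℝ := v x / √(∑ y ∈ T, v y ^ 2)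

noncomputable def centered (v : α → ℝ) (x : α) : ℝ := v x - (∑ y ∈ T, v y) / #T

noncomputable def normalizedUtility (v : α → ℝ) : α → ℝ := l2Normalize T (centered T v)

variable {T} {v v' : α → ℝ}

theorem sum_sq_l2Normalize_eq_div (v : α → ℝ) :
    ∑ x ∈ T, l2Normalize T v x ^ 2 = (∑ x ∈ T, v x ^ 2) / ∑ x ∈ T, v x ^ 2 := by
  simp_rw [l2Normalize, div_pow, Real.sq_sqrt (sum_nonneg fun x _ => sq_nonneg (v x))]
  rw [sum_div]

theorem sum_sq_l2Normalize_le (v : α → ℝ) : ∑ x ∈ T, l2Normalize T v x ^ 2 ≤ 1 := by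
  rw [sum_sq_l2Normalize_eq_div]
  exact div_self_le_one _

theorem sum_sq_pos_of_exists_ne_zero (h : ∃ x ∈ T, v x ≠ 0) : 0 < ∑ x ∈ T, v x ^ 2 :=
  let ⟨x, hx, hvx⟩ := h
  sum_pos' (fun y _ => sq_nonneg (v y)) ⟨x, hx, sq_pos_of_ne_zero hvx⟩

theorem sum_sq_l2Normalize (h : ∃ x ∈ T, v x ≠ 0) : ∑ x ∈ T, l2Normalize T v x ^ 2 = 1 := by
  rw [sum_sq_l2Normalize_eq_div]
  exact div_self (sum_sq_pos_of_exists_ne_zero h).ne'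

theorem sqrt_mul_l2Normalize (v : α → ℝ) {x : α} (hx : x ∈ T) :
    √(∑ y ∈ T, v y ^ 2) * l2Normalize T v x = v x := by
  rcases eq_or_ne √(∑ y ∈ T, v y ^ 2) 0 with h | h
  · have hle : v x ^ 2 ≤ 0 :=
      (single_le_sum (fun y _ => sq_nonneg (v y)) hx).trans (Real.sqrt_eq_zero'.mp h)
    rw [h, zero_mul, pow_eq_zero_iff two_ne_zero |>.mp (le_antisymm hle (sq_nonneg _))]
  · exact mul_div_cancel₀ _ h

theorem l2Normalize_nonneg (hv : ∀ x, 0 ≤ v x) (x : α) : 0 ≤ l2Normalize T v x :=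
  div_nonneg (hv x) (Real.sqrt_nonneg _)

theorem abs_l2Normalize_le_one (v : α → ℝ) {x : α} (hx : x ∈ T) : |l2Normalize T v x| ≤ 1 :=
  (sq_le_one_iff_abs_le_one _).mp
    ((single_le_sum (fun y _ => sq_nonneg (l2Normalize T v y)) hx).trans
      (sum_sq_l2Normalize_le v))

theorem eqOn_of_l2Normalize_eqOn (hsum : ∑ x ∈ T, v x = ∑ x ∈ T, v' x)
    (hne : ∑ x ∈ T, v x ≠ 0) (h : Set.EqOn (l2Normalize T v) (l2Normalize T v') T) :
    Set.EqOn v v' T := by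
  set c := √(∑ y ∈ T, v y ^ 2)
  set c' := √(∑ y ∈ T, v' y ^ 2)
  have hsum_eq : ∀ w : α → ℝ, ∑ x ∈ T, w x = √(∑ y ∈ T, w y ^ 2) * ∑ x ∈ T, l2Normalize T w x :=
    fun w => by rw [mul_sum]; exact sum_congr rfl fun x hx => (sqrt_mul_l2Normalize w hx).symm
  have hσ : ∑ x ∈ T, l2Normalize T v x = ∑ x ∈ T, l2Normalize T v' x := sum_congr rfl h
  have hcc : c = c' := by
    rw [hsum_eq v, hsum_eq v', hσ] at hsum
    rw [hsum_eq v, hσ] at hne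
    exact mul_right_cancel₀ (right_ne_zero_of_mul hne) hsum
  intro x hx
  rw [← sqrt_mul_l2Normalize v hx, ← sqrt_mul_l2Normalize v' hx, h hx]
  exact congrArg (· * _) hcc

theorem exists_pos_mul_of_l2Normalize_eqOn (hne : ∃ x ∈ T, v' x ≠ 0)
    (h : Set.EqOn (l2Normalize T v) (l2Normalize T v') T) :
    ∃ a : ℝ, 0 < a ∧ ∀ x ∈ T, v x = a * v' x := by
  set c := √(∑ y ∈ T, v y ^ 2)
  set c' := √(∑ y ∈ T, v' y ^ 2)
  have hc' : 0 < c' := Real.sqrt_pos.mpr (sum_sq_pos_of_exists_ne_zero hne)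
  obtain ⟨x₀, hx₀, hvx₀⟩ := hne
  have hc : 0 < c := by
    refine (Real.sqrt_nonneg _).lt_of_ne fun hc => hvx₀ ?_
    have := h hx₀
    simp only [l2Normalize, ← hc, div_zero] at this
    exact (div_eq_zero_iff.mp this.symm).resolve_right hc'.ne'
  refine ⟨c / c', div_pos hc hc', fun x hx => ?_⟩
  rw [← sqrt_mul_l2Normalize v hx, h hx, l2Normalize]
  ring

theorem sum_centered (v : α → ℝ) : ∑ x ∈ T, centered T v x = 0 := by
  rcases T.eq_empty_or_nonempty with rfl | hT
  · simp
  simp only [centered]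
  rw [sum_sub_distrib, sum_const, nsmul_eq_mul,
    mul_div_cancel₀ _ (Nat.cast_ne_zero.mpr hT.card_pos.ne'), sub_self]

theorem sum_normalizedUtility (v : α → ℝ) : ∑ x ∈ T, normalizedUtility T v x = 0 := by
  simp only [normalizedUtility, l2Normalize]
  rw [← sum_div, sum_centered, zero_div]

theorem exists_centered_ne_zero (h : ∃ x ∈ T, ∃ y ∈ T, v x ≠ v y) :
    ∃ x ∈ T, centered T v x ≠ 0 := by
  obtain ⟨x, hx, y, hy, hxy⟩ := h
  by_contra! h0
  have hx0 := h0 x hx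
  have hy0 := h0 y hy
  simp only [centered] at hx0 hy0
  exact hxy (by linarith)

theorem isPosAffineOn_of_normalizedUtility_eqOn (hne : ∃ x ∈ T, ∃ y ∈ T, v' x ≠ v' y)
    (h : Set.EqOn (normalizedUtility T v) (normalizedUtility T v') T) : IsPosAffineOn T v v' := by
  obtain ⟨a, ha, hav⟩ := exists_pos_mul_of_l2Normalize_eqOn (exists_centered_ne_zero hne) h
  refine ⟨a, ha, (∑ y ∈ T, v y) / #T - a * ((∑ y ∈ T, v' y) / #T), fun x hx => ?_⟩
  have := hav x hx
  simp only [centered] at this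
  linarith

end Normalize

section InnerProduct

variable {α β : Type*} {T : Finset α} {a b : α → ℝ}

theorem sum_sub_sq (T : Finset α) (a b : α → ℝ) :
    ∑ x ∈ T, (a x - b x) ^ 2 = ∑ x ∈ T, a x ^ 2 + ∑ x ∈ T, b x ^ 2 - 2 * ∑ x ∈ T, a x * b x := by
  simp_rw [sub_sq, sum_add_distrib, sum_sub_distrib, mul_assoc, ← mul_sum]
  ring

theorem sum_mul_le_one (ha : ∑ x ∈ T, a x ^ 2 ≤ 1) (hb : ∑ x ∈ T, b x ^ 2 ≤ 1) :
    ∑ x ∈ T, a x * b x ≤ 1 := by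
  nlinarith [sum_sub_sq T a b, sum_nonneg fun x (_ : x ∈ T) => sq_nonneg (a x - b x)]

theorem eqOn_of_sum_mul_eq_one (ha : ∑ x ∈ T, a x ^ 2 ≤ 1) (hb : ∑ x ∈ T, b x ^ 2 ≤ 1)
    (h : ∑ x ∈ T, a x * b x = 1) : Set.EqOn a b T := by
  have hzero : ∑ x ∈ T, (a x - b x) ^ 2 = 0 :=
    le_antisymm (by linarith [sum_sub_sq T a b]) (sum_nonneg fun x _ => sq_nonneg _)
  intro x hx
  have := (sum_eq_zero_iff_of_nonneg fun y _ => sq_nonneg (a y - b y)).mp hzero x hx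
  exact sub_eq_zero.mp (pow_eq_zero_iff two_ne_zero |>.mp this)

theorem sum_mul_mul_sum_mul_lt_one_or {T' : Finset β} {c d : β → ℝ}
    (ha : ∑ x ∈ T, a x ^ 2 ≤ 1) (hb : ∑ x ∈ T, b x ^ 2 ≤ 1)
    (hc : ∑ y ∈ T', c y ^ 2 ≤ 1) (hd : ∑ y ∈ T', d y ^ 2 ≤ 1) (hab : 0 ≤ ∑ x ∈ T, a x * b x) :
    (∑ x ∈ T, a x * b x) * (∑ y ∈ T', c y * d y) < 1 ∨ (Set.EqOn a b T ∧ Set.EqOn c d T') := by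
  have hab₁ := sum_mul_le_one ha hb
  have hcd₁ := sum_mul_le_one hc hd
  have hcd₂ : -∑ y ∈ T', c y * d y ≤ 1 := by
    simpa [mul_neg, sum_neg_distrib] using
      sum_mul_le_one (b := fun y => -d y) hc (by simpa using hd)
  refine (lt_or_ge _ 1).imp id fun h =>
    ⟨eqOn_of_sum_mul_eq_one ha hb (by nlinarith), eqOn_of_sum_mul_eq_one hc hd (by nlinarith)⟩

end InnerProduct

section SeparatingAct

variable {S Z : Type*} [Fintype S] {T : Finset Z}

noncomputable def separatingAct (T : Finset Z) (q : S → ℝ) (w : Z → ℝ) : S → Z →₀ ℝ :=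
  fun s => Finsupp.indicator T fun z _ =>
    (1 + l2Normalize univ q s * normalizedUtility T w z) / #T

-- The inner product of the unit vectors `q̂ ⊗ ŵ` and `q̂' ⊗ ŵ'`.
noncomputable def actAlignment (T : Finset Z) (q q' : S → ℝ) (w w' : Z → ℝ) : ℝ :=
  (∑ s, l2Normalize univ q s * l2Normalize univ q' s) *
    ∑ z ∈ T, normalizedUtility T w z * normalizedUtility T w' z

theorem separatingAct_apply_of_mem {q : S → ℝ} {w : Z → ℝ} {s : S} {z : Z} (hz : z ∈ T) :
    separatingAct T q w s z = (1 + l2Normalize univ q s * normalizedUtility T w z) / #T :=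
  Finsupp.indicator_of_mem hz _

theorem separatingAct_apply_of_notMem {q : S → ℝ} {w : Z → ℝ} {s : S} {z : Z} (hz : z ∉ T) :
    separatingAct T q w s z = 0 :=
  Finsupp.indicator_of_notMem hz _

theorem support_separatingAct_subset {q : S → ℝ} {w : Z → ℝ} {s : S} :
    (separatingAct T q w s).support ⊆ T :=
  Finsupp.support_indicator_subset _ _

theorem isLottery_separatingAct (hT : T.Nonempty) (q : S → ℝ) (w : Z → ℝ) (s : S) :
    IsLottery (separatingAct T q w s) := by
  refine isLottery_of_support_subset support_separatingAct_subset (fun z => ?_) ?_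
  · by_cases hz : z ∈ T
    · rw [separatingAct_apply_of_mem hz]
      have hprod : |l2Normalize univ q s * normalizedUtility T w z| ≤ 1 := by
        rw [abs_mul]
        exact mul_le_one₀ (abs_l2Normalize_le_one q (mem_univ s)) (abs_nonneg _)
          (abs_l2Normalize_le_one _ hz)
      exact div_nonneg (by linarith [neg_abs_le (l2Normalize univ q s * normalizedUtility T w z)])
        (Nat.cast_nonneg _)
    · rw [separatingAct_apply_of_notMem hz]
  · rw [sum_congr rfl fun z hz => separatingAct_apply_of_mem hz, ← sum_div, sum_add_distrib,
      ← mul_sum, sum_normalizedUtility, mul_zero, add_zero, sum_const, nsmul_one]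
    exact div_self (Nat.cast_ne_zero.mpr hT.card_pos.ne')

theorem separatingAct_congr {q q' : S → ℝ} {w w' : Z → ℝ}
    (hq : l2Normalize univ q = l2Normalize univ q')
    (hw : Set.EqOn (normalizedUtility T w) (normalizedUtility T w') T) :
    separatingAct T q w = separatingAct T q' w' := by
  funext s
  ext z
  by_cases hz : z ∈ T
  · rw [separatingAct_apply_of_mem hz, separatingAct_apply_of_mem hz, hq, hw hz]
  · rw [separatingAct_apply_of_notMem hz, separatingAct_apply_of_notMem hz]

theorem apply_separatingAct {u : (Z →₀ ℝ) → ℝ} (hu : IsAffineOnLotteries u) (hT : T.Nonempty)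
    (q' : S → ℝ) (w' : Z → ℝ) (s : S) :
    u (separatingAct T q' w' s) = (∑ z ∈ T, prizeUtility u z) / #T +
      √(∑ z ∈ T, centered T (prizeUtility u) z ^ 2) / #T *
        (∑ z ∈ T, normalizedUtility T (prizeUtility u) z * normalizedUtility T w' z) *
          l2Normalize univ q' s := by
  set W := prizeUtility u
  set m := (∑ z ∈ T, W z) / #T
  set σ := √(∑ z ∈ T, centered T W z ^ 2)
  have hn : (#T : ℝ) ≠ 0 := Nat.cast_ne_zero.mpr hT.card_pos.ne'
  have hW : ∀ z ∈ T, W z = m + σ * normalizedUtility T W z := fun z hz => by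
    rw [normalizedUtility, sqrt_mul_l2Normalize _ hz, centered]
    ring
  rw [hu.apply_eq_sum (isLottery_separatingAct hT _ _ s) support_separatingAct_subset]
  calc ∑ z ∈ T, separatingAct T q' w' s z * W z
      = ∑ z ∈ T, (m / #T + σ / #T * normalizedUtility T W z
          + m / #T * l2Normalize univ q' s * normalizedUtility T w' z
          + σ / #T * l2Normalize univ q' s *
            (normalizedUtility T W z * normalizedUtility T w' z)) :=
        sum_congr rfl fun z hz => by rw [separatingAct_apply_of_mem hz, hW z hz]; ring
    _ = _ := by
        rw [sum_add_distrib, sum_add_distrib, sum_add_distrib, sum_const, ← mul_sum,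
          ← mul_sum, ← mul_sum, sum_normalizedUtility, sum_normalizedUtility, nsmul_eq_mul]
        field_simp
        ring

theorem seu_separatingAct {q : S → ℝ} {u : (Z →₀ ℝ) → ℝ} (hq : ∑ s, q s = 1)
    (hu : IsAffineOnLotteries u) (hw : ∃ z ∈ T, ∃ z' ∈ T, prizeUtility u z ≠ prizeUtility u z') :
    ∃ α β : ℝ, 0 < β ∧ ∀ (q' : S → ℝ) (w' : Z → ℝ),
      seu q u (separatingAct T q' w') = α + β * actAlignment T q q' (prizeUtility u) w' := by
  obtain ⟨z₀, hz₀, -⟩ := id hw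
  set σ := √(∑ z ∈ T, centered T (prizeUtility u) z ^ 2)
  set κ := √(∑ s, q s ^ 2)
  have hn : (0 : ℝ) < #T := Nat.cast_pos.mpr (card_pos.mpr ⟨z₀, hz₀⟩)
  have hσ : 0 < σ := Real.sqrt_pos.mpr (sum_sq_pos_of_exists_ne_zero (exists_centered_ne_zero hw))
  have hκ : 0 < κ := by
    refine Real.sqrt_pos.mpr (sum_sq_pos_of_exists_ne_zero ?_)
    by_contra! h
    simp [sum_eq_zero fun s _ => h s (mem_univ s)] at hq
  refine ⟨(∑ z ∈ T, prizeUtility u z) / #T, σ * κ / #T, by positivity, fun q' w' => ?_⟩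
  have hqκ : ∑ s, q s * l2Normalize univ q' s
      = κ * ∑ s, l2Normalize univ q s * l2Normalize univ q' s := by
    rw [mul_sum]
    exact sum_congr rfl fun s _ => by rw [← sqrt_mul_l2Normalize q (mem_univ s)]; ring
  simp_rw [seu, apply_separatingAct hu ⟨z₀, hz₀⟩, mul_add, sum_add_distrib, ← sum_mul,
    hq, mul_left_comm (q _), ← mul_sum, hqκ, actAlignment]
  ring

theorem actAlignment_self {q : S → ℝ} {w : Z → ℝ} (hq : ∑ s, q s = 1)
    (hw : ∃ z ∈ T, ∃ z' ∈ T, w z ≠ w z') : actAlignment T q q w w = 1 := by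
  have hq0 : ∃ s ∈ univ, q s ≠ 0 := by
    by_contra! h
    simp [sum_eq_zero h] at hq
  simp_rw [actAlignment, ← sq, sum_sq_l2Normalize hq0, normalizedUtility,
    sum_sq_l2Normalize (exists_centered_ne_zero hw), one_mul]

theorem actAlignment_lt_one_or {q q' : S → ℝ} {w w' : Z → ℝ} (hq : ∀ s, 0 ≤ q s)
    (hq' : ∀ s, 0 ≤ q' s) :
    actAlignment T q q' w w' < 1 ∨ (l2Normalize univ q = l2Normalize univ q' ∧
      Set.EqOn (normalizedUtility T w) (normalizedUtility T w') T) := by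
  refine (sum_mul_mul_sum_mul_lt_one_or (sum_sq_l2Normalize_le q) (sum_sq_l2Normalize_le q')
    (sum_sq_l2Normalize_le _) (sum_sq_l2Normalize_le _)
    (sum_nonneg fun s _ => mul_nonneg (l2Normalize_nonneg hq s) (l2Normalize_nonneg hq' s))).imp
    id fun h => ⟨funext fun s => h.1 (by simp), h.2⟩

theorem seu_separatingAct_lt {q q' : S → ℝ} {u : (Z →₀ ℝ) → ℝ} {w' : Z → ℝ}
    (hq : (∀ s, 0 ≤ q s) ∧ ∑ s, q s = 1) (hu : IsAffineOnLotteries u)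
    (hw : ∃ z ∈ T, ∃ z' ∈ T, prizeUtility u z ≠ prizeUtility u z') (hq' : ∀ s, 0 ≤ q' s)
    (hne : separatingAct T q' w' ≠ separatingAct T q (prizeUtility u)) :
    seu q u (separatingAct T q' w') < seu q u (separatingAct T q (prizeUtility u)) := by
  obtain ⟨α, β, hβ, hseu⟩ := seu_separatingAct hq.2 hu hw
  rw [hseu, hseu, actAlignment_self hq.2 hw]
  rcases actAlignment_lt_one_or hq.1 hq' (T := T) (w := prizeUtility u) (w' := w') with h | h
  · nlinarith
  · exact (hne (separatingAct_congr h.1.symm h.2.symm)).elim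

theorem eq_of_separatingAct_eq {q q' : S → ℝ} {u : (Z →₀ ℝ) → ℝ} {w' : Z → ℝ}
    (hq : (∀ s, 0 ≤ q s) ∧ ∑ s, q s = 1) (hq' : (∀ s, 0 ≤ q' s) ∧ ∑ s, q' s = 1)
    (hu : IsAffineOnLotteries u) (hw : ∃ z ∈ T, ∃ z' ∈ T, prizeUtility u z ≠ prizeUtility u z')
    (h : separatingAct T q' w' = separatingAct T q (prizeUtility u)) :
    q' = q ∧ IsPosAffineOn T w' (prizeUtility u) := by
  obtain ⟨α, β, hβ, hseu⟩ := seu_separatingAct hq.2 hu hw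
  have hseu_eq := congrArg (seu q u) h
  rw [hseu, hseu, actAlignment_self hq.2 hw] at hseu_eq
  rcases actAlignment_lt_one_or hq.1 hq'.1 (T := T) (w := prizeUtility u) (w' := w')
    with hlt | ⟨hq_eq, hw_eq⟩
  · nlinarith
  have hqq : Set.EqOn q' q (univ : Finset S) := eqOn_of_l2Normalize_eqOn (by rw [hq.2, hq'.2])
    (by simp [hq'.2]) fun s _ => (congrFun hq_eq s).symm
  exact ⟨funext fun s => hqq (mem_univ s), isPosAffineOn_of_normalizedUtility_eqOn hw hw_eq.symm⟩

end SeparatingAct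

theorem exists_separatingActs {S Z ι : Type*} [Fintype S] [Fintype ι] {Q : ι → S → ℝ}
    {U : ι → (Z →₀ ℝ) → ℝ} (hQ : ∀ i, (∀ s, 0 ≤ Q i s) ∧ ∑ s, Q i s = 1)
    (hU : ∀ i, IsAffineOnLotteries (U i))
    (hnc : ∀ i, ∃ p p', IsLottery p ∧ IsLottery p' ∧ U i p ≠ U i p') :
    ∃ F : ι → S → Z →₀ ℝ, (∀ i s, IsLottery (F i s)) ∧
      (∀ i j, F j ≠ F i → seu (Q i) (U i) (F j) < seu (Q i) (U i) (F i)) ∧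
      (∀ i j, F j = F i → Q j = Q i ∧ IsPosAffineOn {p | IsLottery p} (U j) (U i)) := by
  obtain ⟨T, hTnc, hTaff⟩ := exists_finset_forall_isPosAffineOn_imp
    (fun i => prizeUtility (U i)) fun i => (hU i).exists_prizeUtility_ne (hnc i)
  refine ⟨fun i => separatingAct T (Q i) (prizeUtility (U i)), fun i s => ?_,
    fun i j hne => seu_separatingAct_lt (hQ i) (hU i) (hTnc i) (hQ j).1 hne, fun i j h => ?_⟩
  · obtain ⟨z, hz, -⟩ := hTnc i
    exact isLottery_separatingAct ⟨z, hz⟩ _ _ s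
  · obtain ⟨hq, haff⟩ := eq_of_separatingAct_eq (hQ i) (hQ j) (hU i) (hTnc i) h
    exact ⟨hq, (hU j).isPosAffineOn_of_prizeUtility (hU i) (hTaff j i haff)⟩

theorem tieBreak_eq_ite {α : Type*} [DecidableEq α] {τ : α → Finset α → ℝ} {V : α → ℝ}
    {A : Finset α} {f : α} (hreg : ∀ g, τ g A ≠ 0 → g ∈ A ∧ ∀ g' ∈ A, V g' ≤ V g)
    (hsum : ∑ g ∈ A, τ g A = 1) (hf : f ∈ A) (hmax : ∀ g ∈ A, g ≠ f → V g < V f) (g : α) :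
    τ g A = if g = f then 1 else 0 := by
  have hzero : ∀ g, g ≠ f → τ g A = 0 := fun g hne => by
    by_contra h
    obtain ⟨hg, hle⟩ := hreg g h
    exact (hle f hf).not_gt (hmax g hg hne)
  split_ifs with h
  · rw [h, ← hsum, sum_eq_single_of_mem f hf fun g _ => hzero g]
  · exact hzero g h

section Representation

variable {S Z X X' : Type*} [Fintype S]

structure IsRSEURep [Fintype X] (ρ : (S → Z →₀ ℝ) → Finset (S → Z →₀ ℝ) → S → ℝ)
    (q : X → S → ℝ) (u : X → (Z →₀ ℝ) → ℝ) (μ : X → S → ℝ)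
    (τ : X → (S → Z →₀ ℝ) → Finset (S → Z →₀ ℝ) → ℝ) : Prop where
  full_support : ∀ x, 0 < ∑ s, μ x s
  tie_regular : ∀ x f A, τ x f A ≠ 0 → f ∈ A ∧ ∀ g ∈ A, seu (q x) (u x) g ≤ seu (q x) (u x) f
  tie_sum : ∀ x (A : Finset (S → Z →₀ ℝ)), A.Nonempty → (∀ g ∈ A, ∀ s, IsLottery (g s)) →
    ∑ f ∈ A, τ x f A = 1
  rep : ∀ f A s, f ∈ A → (∀ g ∈ A, ∀ s', IsLottery (g s')) → ρ f A s = ∑ x, μ x s * τ x f A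

def IsSeparatingFor (q : X → S → ℝ) (u : X → (Z →₀ ℝ) → ℝ) (A : Finset (S → Z →₀ ℝ))
    (f : X → S → Z →₀ ℝ) : Prop :=
  ∀ x, f x ∈ A ∧ ∀ g ∈ A, g ≠ f x → seu (q x) (u x) g < seu (q x) (u x) (f x)

theorem isSeparatingFor_image [DecidableEq (S → Z →₀ ℝ)] {ι : Type*} [Fintype ι]
    {q : X → S → ℝ} {u : X → (Z →₀ ℝ) → ℝ} (F : ι → S → Z →₀ ℝ) (e : X → ι)
    (h : ∀ x j, F j ≠ F (e x) → seu (q x) (u x) (F j) < seu (q x) (u x) (F (e x))) :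
    IsSeparatingFor q u (univ.image F) (F ∘ e) := fun x =>
  ⟨mem_image_of_mem F (mem_univ _), fun g hg hne => by
    obtain ⟨j, -, rfl⟩ := mem_image.mp hg
    exact h x j hne⟩

namespace IsRSEURep

variable [Fintype X] [Fintype X'] {ρ : (S → Z →₀ ℝ) → Finset (S → Z →₀ ℝ) → S → ℝ}
  {q : X → S → ℝ} {u : X → (Z →₀ ℝ) → ℝ} {μ : X → S → ℝ}
  {τ : X → (S → Z →₀ ℝ) → Finset (S → Z →₀ ℝ) → ℝ}
  {q' : X' → S → ℝ} {u' : X' → (Z →₀ ℝ) → ℝ} {μ' : X' → S → ℝ}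
  {τ' : X' → (S → Z →₀ ℝ) → Finset (S → Z →₀ ℝ) → ℝ}
  {A : Finset (S → Z →₀ ℝ)} {f : X → S → Z →₀ ℝ} {f' : X' → S → Z →₀ ℝ}

theorem tieBreak_eq [DecidableEq (S → Z →₀ ℝ)] (R : IsRSEURep ρ q u μ τ)
    (hA : ∀ g ∈ A, ∀ s, IsLottery (g s)) (hf : IsSeparatingFor q u A f) (x : X)
    (g : S → Z →₀ ℝ) : τ x g A = if g = f x then 1 else 0 :=
  tieBreak_eq_ite (fun g => R.tie_regular x g A) (R.tie_sum x A ⟨f x, (hf x).1⟩ hA) (hf x).1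
    (hf x).2 g

theorem choiceProb_eq_zero (R : IsRSEURep ρ q u μ τ) (hA : ∀ g ∈ A, ∀ s, IsLottery (g s))
    (hf : IsSeparatingFor q u A f) {g : S → Z →₀ ℝ} (hg : g ∈ A) (hgf : ∀ x, f x ≠ g) (s : S) :
    ρ g A s = 0 := by
  classical
  rw [R.rep g A s hg hA]
  exact sum_eq_zero fun x _ => by rw [R.tieBreak_eq hA hf, if_neg (hgf x).symm, mul_zero]

theorem choiceProb_self (R : IsRSEURep ρ q u μ τ) (hA : ∀ g ∈ A, ∀ s, IsLottery (g s))
    (hf : IsSeparatingFor q u A f) (hinj : Function.Injective f) (x : X) (s : S) :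
    ρ (f x) A s = μ x s := by
  classical
  rw [R.rep _ A s (hf x).1 hA, sum_eq_single x (fun y _ hyx => ?_) (by simp),
    R.tieBreak_eq hA hf, if_pos rfl, mul_one]
  rw [R.tieBreak_eq hA hf, if_neg (hinj.ne hyx.symm), mul_zero]

theorem exists_apply_eq (R : IsRSEURep ρ q u μ τ) (R' : IsRSEURep ρ q' u' μ' τ')
    (hA : ∀ g ∈ A, ∀ s, IsLottery (g s)) (hf : IsSeparatingFor q u A f)
    (hf' : IsSeparatingFor q' u' A f') (hinj : Function.Injective f) (x : X) :
    ∃ x', f' x' = f x := by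
  by_contra! h
  refine (R.full_support x).ne' (sum_eq_zero fun s _ => ?_)
  rw [← R.choiceProb_self hA hf hinj x s, R'.choiceProb_eq_zero hA hf' (hf x).1 h s]

theorem exists_equiv (R : IsRSEURep ρ q u μ τ) (R' : IsRSEURep ρ q' u' μ' τ')
    (hA : ∀ g ∈ A, ∀ s, IsLottery (g s)) (hf : IsSeparatingFor q u A f)
    (hf' : IsSeparatingFor q' u' A f') (hinj : Function.Injective f)
    (hinj' : Function.Injective f') :
    ∃ φ : X ≃ X', ∀ x, f' (φ x) = f x ∧ ∀ s, μ x s = μ' (φ x) s := by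
  choose φ hφ using R.exists_apply_eq R' hA hf hf' hinj
  choose ψ hψ using R'.exists_apply_eq R hA hf' hf hinj'
  refine ⟨⟨φ, ψ, fun x => hinj (by rw [hψ, hφ]), fun x' => hinj' (by rw [hφ, hψ])⟩,
    fun x => ⟨hφ x, fun s => ?_⟩⟩
  rw [← R.choiceProb_self hA hf hinj x s, ← R'.choiceProb_self hA hf' hinj' _ s, Equiv.coe_fn_mk,
    hφ]

end IsRSEURep

end Representation

theorem static_RSEU_uniqueness_general
    {S Z X X' : Type*} [Fintype S] [Fintype X] [Fintype X']
    (q : X → S → ℝ) (u : X → (Z →₀ ℝ) → ℝ) (μ : X → S → ℝ)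
    (τ : X → (S → Z →₀ ℝ) → Finset (S → Z →₀ ℝ) → ℝ)
    (q' : X' → S → ℝ) (u' : X' → (Z →₀ ℝ) → ℝ) (μ' : X' → S → ℝ)
    (τ' : X' → (S → Z →₀ ℝ) → Finset (S → Z →₀ ℝ) → ℝ)
    -- each (q x, u x) is a non-constant SEU
    (hqprob : ∀ x, (∀ s, 0 ≤ q x s) ∧ (∑ s, q x s) = 1)
    (haff : ∀ x, IsAffineOnLotteries (u x))
    (hnc : ∀ x, ∃ p p', IsLottery p ∧ IsLottery p' ∧ u x p ≠ u x p')
    (hdist : ∀ x y, x ≠ y → ¬(q x = q y ∧ ∃ a : ℝ, 0 < a ∧ ∃ b : ℝ,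
      ∀ p, IsLottery p → u x p = a * u y p + b))
    (hqprob' : ∀ x', (∀ s, 0 ≤ q' x' s) ∧ (∑ s, q' x' s) = 1)
    (haff' : ∀ x', IsAffineOnLotteries (u' x'))
    (hnc' : ∀ x', ∃ p p', IsLottery p ∧ IsLottery p' ∧ u' x' p ≠ u' x' p')
    (hdist' : ∀ x' y', x' ≠ y' → ¬(q' x' = q' y' ∧ ∃ a : ℝ, 0 < a ∧ ∃ b : ℝ,
      ∀ p, IsLottery p → u' x' p = a * u' y' p + b))
    -- μ, μ' are probability measures with full marginal support and correct interim beliefs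
    (hμfull : ∀ x, 0 < ∑ s, μ x s)
    (hμfull' : ∀ x', 0 < ∑ s, μ' x' s)
    -- regular tie-breakers
    (hτreg : ∀ x f A, τ x f A ≠ 0 → f ∈ A ∧
      ∀ g ∈ A, (∑ s, q x s * u x (g s)) ≤ ∑ s, q x s * u x (f s))
    (hτ1 : ∀ x (A : Finset (S → Z →₀ ℝ)), A.Nonempty →
      (∀ g ∈ A, ∀ s, IsLottery (g s)) → ∑ f ∈ A, τ x f A = 1)
    (hτreg' : ∀ x' f A, τ' x' f A ≠ 0 → f ∈ A ∧
      ∀ g ∈ A, (∑ s, q' x' s * u' x' (g s)) ≤ ∑ s, q' x' s * u' x' (f s))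
    (hτ1' : ∀ x' (A : Finset (S → Z →₀ ℝ)), A.Nonempty →
      (∀ g ∈ A, ∀ s, IsLottery (g s)) → ∑ f ∈ A, τ' x' f A = 1)
    -- both represent the same aSCF ρ
    (ρ : (S → Z →₀ ℝ) → Finset (S → Z →₀ ℝ) → S → ℝ)
    (hrep : ∀ f A s, f ∈ A → (∀ g ∈ A, ∀ s', IsLottery (g s')) →
      ρ f A s = ∑ x, μ x s * τ x f A)
    (hrep' : ∀ f A s, f ∈ A → (∀ g ∈ A, ∀ s', IsLottery (g s')) →
      ρ f A s = ∑ x', μ' x' s * τ' x' f A) :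
    ∃ φ : X ≃ X', ∀ x : X,
      q' (φ x) = q x ∧
      (∃ a : ℝ, 0 < a ∧ ∃ b : ℝ, ∀ p, IsLottery p → u' (φ x) p = a * u x p + b) ∧
      ∀ s, μ x s = μ' (φ x) s := by
  classical
  have R : IsRSEURep ρ q u μ τ := ⟨hμfull, hτreg, hτ1, hrep⟩
  have R' : IsRSEURep ρ q' u' μ' τ' := ⟨hμfull', hτreg', hτ1', hrep'⟩
  obtain ⟨F, hlot, hlt, heq⟩ := exists_separatingActs (Q := Sum.elim q q') (U := Sum.elim u u')
    (Sum.rec hqprob hqprob') (Sum.rec haff haff') (Sum.rec hnc hnc')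
  have hA : ∀ g ∈ univ.image F, ∀ s, IsLottery (g s) := by
    simpa only [mem_image, mem_univ, true_and, forall_exists_index, forall_apply_eq_imp_iff]
      using hlot
  have hinj : Function.Injective (F ∘ Sum.inl) := fun x y h =>
    by_contra fun hne => hdist x y hne (heq (.inl y) (.inl x) h)
  have hinj' : Function.Injective (F ∘ Sum.inr) := fun x y h =>
    by_contra fun hne => hdist' x y hne (heq (.inr y) (.inr x) h)
  obtain ⟨φ, hφ⟩ := R.exists_equiv R' hA (isSeparatingFor_image F Sum.inl fun x => hlt (.inl x))
    (isSeparatingFor_image F Sum.inr fun x' => hlt (.inr x')) hinj hinj'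
  refine ⟨φ, fun x => ?_⟩
  obtain ⟨hq, hu⟩ := heq (.inl x) (.inr (φ x)) (hφ x).1
  exact ⟨hq, hu, (hφ x).2⟩

/-- Essential uniqueness of the static AS-version R-SEU representation with correct
interim beliefs: two representations of the same aSCF are related by a bijection
`φ` of the subjective state spaces that preserves beliefs, transforms Bernoulli
utilities by positive affine transformations, and preserves the measure `μ`. -/
theorem static_RSEU_uniqueness
    {S Z X X' : Type*} [Fintype S] [Fintype X] [Fintype X']
    (q : X → S → ℝ) (u : X → (Z →₀ ℝ) → ℝ) (μ : X → S → ℝ)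
    (τ : X → (S → Z →₀ ℝ) → Finset (S → Z →₀ ℝ) → ℝ)
    (q' : X' → S → ℝ) (u' : X' → (Z →₀ ℝ) → ℝ) (μ' : X' → S → ℝ)
    (τ' : X' → (S → Z →₀ ℝ) → Finset (S → Z →₀ ℝ) → ℝ)
    -- each (q x, u x) is a non-constant SEU
    (hqprob : ∀ x, (∀ s, 0 ≤ q x s) ∧ (∑ s, q x s) = 1)
    (haff : ∀ x, IsAffineOnLotteries (u x))
    (hnc : ∀ x, ∃ p p', IsLottery p ∧ IsLottery p' ∧ u x p ≠ u x p')
    (hdist : ∀ x y, x ≠ y → ¬(q x = q y ∧ ∃ a : ℝ, 0 < a ∧ ∃ b : ℝ,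
      ∀ p, IsLottery p → u x p = a * u y p + b))
    (hqprob' : ∀ x', (∀ s, 0 ≤ q' x' s) ∧ (∑ s, q' x' s) = 1)
    (haff' : ∀ x', IsAffineOnLotteries (u' x'))
    (hnc' : ∀ x', ∃ p p', IsLottery p ∧ IsLottery p' ∧ u' x' p ≠ u' x' p')
    (hdist' : ∀ x' y', x' ≠ y' → ¬(q' x' = q' y' ∧ ∃ a : ℝ, 0 < a ∧ ∃ b : ℝ,
      ∀ p, IsLottery p → u' x' p = a * u' y' p + b))
    -- μ, μ' are probability measures with full marginal support and correct interim beliefs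
    (hμ0 : ∀ x s, 0 ≤ μ x s) (hμ1 : ∑ x, ∑ s, μ x s = 1)
    (hμfull : ∀ x, 0 < ∑ s, μ x s)
    (hcib : ∀ x s, μ x s = (∑ s', μ x s') * q x s)
    (hμ0' : ∀ x' s, 0 ≤ μ' x' s) (hμ1' : ∑ x', ∑ s, μ' x' s = 1)
    (hμfull' : ∀ x', 0 < ∑ s, μ' x' s)
    (hcib' : ∀ x' s, μ' x' s = (∑ s', μ' x' s') * q' x' s)
    -- regular tie-breakers
    (hτreg : ∀ x f A, τ x f A ≠ 0 → f ∈ A ∧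
      ∀ g ∈ A, (∑ s, q x s * u x (g s)) ≤ ∑ s, q x s * u x (f s))
    (hτ1 : ∀ x (A : Finset (S → Z →₀ ℝ)), A.Nonempty →
      (∀ g ∈ A, ∀ s, IsLottery (g s)) → ∑ f ∈ A, τ x f A = 1)
    (hτreg' : ∀ x' f A, τ' x' f A ≠ 0 → f ∈ A ∧
      ∀ g ∈ A, (∑ s, q' x' s * u' x' (g s)) ≤ ∑ s, q' x' s * u' x' (f s))
    (hτ1' : ∀ x' (A : Finset (S → Z →₀ ℝ)), A.Nonempty →
      (∀ g ∈ A, ∀ s, IsLottery (g s)) → ∑ f ∈ A, τ' x' f A = 1)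
    -- both represent the same aSCF ρ
    (ρ : (S → Z →₀ ℝ) → Finset (S → Z →₀ ℝ) → S → ℝ)
    (hrep : ∀ f A s, f ∈ A → (∀ g ∈ A, ∀ s', IsLottery (g s')) →
      ρ f A s = ∑ x, μ x s * τ x f A)
    (hrep' : ∀ f A s, f ∈ A → (∀ g ∈ A, ∀ s', IsLottery (g s')) →
      ρ f A s = ∑ x', μ' x' s * τ' x' f A) :
    ∃ φ : X ≃ X', ∀ x : X,
      q' (φ x) = q x ∧
      (∃ a : ℝ, 0 < a ∧ ∃ b : ℝ, ∀ p, IsLottery p → u' (φ x) p = a * u x p + b) ∧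
      ∀ s, μ x s = μ' (φ x) s :=
  static_RSEU_uniqueness_general q u μ τ q' u' μ' τ' hqprob haff hnc hdist hqprob' haff' hnc' hdist'
    hμfull hμfull' hτreg hτ1 hτreg' hτ1' ρ hrep hrep'
end

section
/- Suppose an aSCF ρ has an AS-version R-SEU representation ρ(f,A,s) = Σ_{(q,u)∈SubS} μ(q,u,s)τ_{q,u}(f,A) and there exists a best constant act f̄ (i.e., ρ̄(f,{f,f̄}) = 0 for every constant act f ≠ f̄, equivalently u(f̄) > u(f) for every (q,u) ∈ SubS and constant f ≠ f̄). If all Bernoulli utilities appearing in SubS are positive affine transformations of one another, then ρ satisfies C-Determinism*: for every menu A of constant acts and every f ∈ A, lim_{a→1} ρ̄(af + (1−a)f̄, (A∖{f}) ∪ {af+(1−a)f̄}) ∈ {0,1}. -/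
open Finset Filter Topology

attribute [local instance] Classical.propDecidable

/-!
All utilities induce the same ranking of lotteries, so every regular tie-breaker puts all its
mass on the mixture `a f + (1 - a) f̄` when it is strictly best in the menu, and none when some
act strictly beats it; then `ρ̄` is `1` or `0`. If another act `g` of the menu beats `f`, it beats
the mixture for `a` close to `1` by continuity in `a`. Otherwise the mixture, pulled towards the
best act `f̄`, strictly beats every other act of the menu for all `a < 1`.
-/

lemma IsLottery.mix {Z : Type*} {p q : Z →₀ ℝ} (hp : IsLottery p) (hq : IsLottery q)
    {a : ℝ} (h0 : 0 ≤ a) (h1 : a ≤ 1) : IsLottery (a • p + (1 - a) • q) := by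
  constructor
  · intro z
    have := hp.1 z
    have := hq.1 z
    simp only [Finsupp.add_apply, Finsupp.smul_apply, smul_eq_mul]
    nlinarith
  · rw [Finsupp.sum_add_index' (fun _ => rfl) (fun _ _ _ => rfl),
      Finsupp.sum_smul_index (fun _ => rfl), Finsupp.sum_smul_index (fun _ => rfl),
      ← Finsupp.mul_sum, ← Finsupp.mul_sum, hp.2, hq.2]
    ring

lemma lt_iff_lt_of_posAffine {α : Type*} {P : α → Prop} {u v : α → ℝ}
    (h : ∃ a : ℝ, 0 < a ∧ ∃ b : ℝ, ∀ p, P p → u p = a * v p + b)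
    {p q : α} (hp : P p) (hq : P q) : u p < u q ↔ v p < v q := by
  obtain ⟨a, ha, b, huv⟩ := h
  rw [huv p hp, huv q hq, add_lt_add_iff_right, mul_lt_mul_iff_right₀ ha]

lemma lt_mix_of_le_of_lt {r s t a : ℝ} (ha0 : 0 ≤ a) (ha1 : a < 1) (hs : r ≤ s) (ht : r < t) :
    r < a * s + (1 - a) * t := by
  nlinarith

lemma eventually_mix_lt {r s : ℝ} (t : ℝ) (hs : s < r) :
    ∀ᶠ a in 𝓝 (1 : ℝ), a * s + (1 - a) * t < r := by
  have hcont : Tendsto (fun a : ℝ => a * s + (1 - a) * t) (𝓝 1) (𝓝 s) := by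
    refine Continuous.tendsto' (by fun_prop) 1 s ?_
    simp
  exact hcont.eventually_lt_const hs

section MixtureWithBest

variable {Z : Type*} {v : (Z →₀ ℝ) → ℝ} {f g fbar : Z →₀ ℝ}

lemma eventually_utility_mix_lt (hv : IsAffineOnLotteries v) (hf : IsLottery f)
    (hfbar : IsLottery fbar) (hfg : v f < v g) :
    ∀ᶠ a : ℝ in 𝓝[Set.Ico 0 1] 1, v (a • f + (1 - a) • fbar) < v g := by
  filter_upwards [self_mem_nhdsWithin,
    (eventually_mix_lt (v fbar) hfg).filter_mono nhdsWithin_le_nhds] with a ha hlt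
  rwa [hv f fbar hf hfbar a ha.1 ha.2.le]

lemma lt_utility_mix_of_le (hv : IsAffineOnLotteries v) (hf : IsLottery f)
    (hfbar : IsLottery fbar) (hg : IsLottery g)
    (hbest : ∀ p, IsLottery p → p ≠ fbar → v p < v fbar) (hgf : v g ≤ v f)
    {a : ℝ} (ha : a ∈ Set.Ico (0 : ℝ) 1) (hgm : g ≠ a • f + (1 - a) • fbar) :
    v g < v (a • f + (1 - a) • fbar) := by
  have hgfbar : g ≠ fbar := by
    intro hgf'
    -- `g = fbar` would give `v fbar ≤ v f`, forcing `f = fbar` and then `g = fbar = mixture`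
    have hffbar : f = fbar := by
      by_contra hne
      exact (hgf' ▸ hgf).not_gt (hbest f hf hne)
    exact hgm (by rw [hgf', hffbar, ← add_smul]; simp)
  rw [hv f fbar hf hfbar a ha.1 ha.2.le]
  exact lt_mix_of_le_of_lt ha.1 ha.2 hgf (hbest g hg hgfbar)

end MixtureWithBest

section TieBreak

variable {α : Type*} {u : α → ℝ} {τ : α → Finset α → ℝ}

lemma tieBreak_eq_zero_of_lt
    (hτreg : ∀ p A, τ p A ≠ 0 → p ∈ A ∧ ∀ r ∈ A, u r ≤ u p)
    {p g : α} {A : Finset α} (hg : g ∈ A) (hpg : u p < u g) : τ p A = 0 := by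
  by_contra hτ
  exact (hpg.trans_le ((hτreg p A hτ).2 g hg)).false

lemma tieBreak_eq_one_of_forall_lt
    (hτreg : ∀ p A, τ p A ≠ 0 → p ∈ A ∧ ∀ r ∈ A, u r ≤ u p)
    {p : α} {A : Finset α} (hA : ∑ q ∈ A, τ q A = 1) (hp : p ∈ A)
    (hdom : ∀ g ∈ A, g ≠ p → u g < u p) : τ p A = 1 := by
  rwa [Finset.sum_eq_single_of_mem p hp fun g hg hgp =>
    tieBreak_eq_zero_of_lt hτreg hp (hdom g hg hgp)] at hA

end TieBreak

section RandomUtility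

variable {α X : Type*} [Fintype X] {w : X → ℝ} {u : X → α → ℝ}
  {τ : X → α → Finset α → ℝ}

lemma sum_weighted_tieBreak_eq_zero
    (hτreg : ∀ x p A, τ x p A ≠ 0 → p ∈ A ∧ ∀ r ∈ A, u x r ≤ u x p)
    {p g : α} {A : Finset α} (hg : g ∈ A) (hpg : ∀ x, u x p < u x g) :
    ∑ x, w x * τ x p A = 0 := by
  simp [tieBreak_eq_zero_of_lt (hτreg _) hg (hpg _)]

lemma sum_weighted_tieBreak_eq_one (hw1 : ∑ x, w x = 1)
    (hτreg : ∀ x p A, τ x p A ≠ 0 → p ∈ A ∧ ∀ r ∈ A, u x r ≤ u x p)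
    {p : α} {A : Finset α} (hA : ∀ x, ∑ q ∈ A, τ x q A = 1) (hp : p ∈ A)
    (hdom : ∀ x, ∀ g ∈ A, g ≠ p → u x g < u x p) :
    ∑ x, w x * τ x p A = 1 := by
  simp [tieBreak_eq_one_of_forall_lt (hτreg _) (hA _) hp (hdom _), hw1]

end RandomUtility

theorem c_determinism_star_general
    {Z X : Type*} [Fintype X]
    (w : X → ℝ) (hw1 : ∑ x, w x = 1)
    (u : X → (Z →₀ ℝ) → ℝ) (haff : ∀ x, IsAffineOnLotteries (u x))
    -- all Bernoulli utilities are positive affine transformations of one another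
    (hposaff : ∀ x y, ∃ a : ℝ, 0 < a ∧ ∃ b : ℝ, ∀ p, IsLottery p → u x p = a * u y p + b)
    -- regular tie-breakers
    (τ : X → (Z →₀ ℝ) → Finset (Z →₀ ℝ) → ℝ)
    (hτreg : ∀ x p A, τ x p A ≠ 0 → p ∈ A ∧ ∀ r ∈ A, u x r ≤ u x p)
    (hτ1 : ∀ x (A : Finset (Z →₀ ℝ)), A.Nonempty → (∀ r ∈ A, IsLottery r) →
      ∑ p ∈ A, τ x p A = 1)
    -- the marginal stochastic choice function and its representation
    (ρ : (Z →₀ ℝ) → Finset (Z →₀ ℝ) → ℝ)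
    (hrep : ∀ p (A : Finset (Z →₀ ℝ)), (∀ r ∈ A, IsLottery r) →
      ρ p A = ∑ x, w x * τ x p A)
    -- the best constant act
    (fbar : Z →₀ ℝ) (hfbarlot : IsLottery fbar)
    (hbest : ∀ x p, IsLottery p → p ≠ fbar → u x p < u x fbar) :
    ∀ A : Finset (Z →₀ ℝ), A.Nonempty → (∀ r ∈ A, IsLottery r) → ∀ f ∈ A,
      ∃ c : ℝ, (c = 0 ∨ c = 1) ∧
        Tendsto (fun a : ℝ =>
            ρ (a • f + (1 - a) • fbar) ((A.erase f) ∪ {a • f + (1 - a) • fbar}))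
          (nhdsWithin 1 (Set.Ico (0 : ℝ) 1)) (nhds c) := by
  intro A _ hAlot f hf
  obtain ⟨x₀⟩ : Nonempty X := by
    by_contra hX
    simp [not_nonempty_iff.mp hX] at hw1
  have hflot := hAlot f hf
  set B := A.erase f
  have hBlot : ∀ g ∈ B, IsLottery g := fun g hg => hAlot g (Finset.mem_of_mem_erase hg)
  set m : ℝ → Z →₀ ℝ := fun a => a • f + (1 - a) • fbar
  have hmlot : ∀ a ∈ Set.Ico (0 : ℝ) 1, IsLottery (m a) := fun a ha =>
    hflot.mix hfbarlot ha.1 ha.2.le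
  have hmenu : ∀ a ∈ Set.Ico (0 : ℝ) 1, ∀ r ∈ B ∪ {m a}, IsLottery r := fun a ha =>
    Finset.forall_mem_union.mpr ⟨hBlot, by simpa using hmlot a ha⟩
  have hmmem : ∀ a, m a ∈ B ∪ {m a} := fun a => by simp
  by_cases hbeat : ∃ g ∈ B, u x₀ f < u x₀ g
  · obtain ⟨g, hgB, hfg⟩ := hbeat
    refine ⟨0, Or.inl rfl, tendsto_const_nhds.congr' ?_⟩
    filter_upwards [self_mem_nhdsWithin,
      eventually_utility_mix_lt (haff x₀) hflot hfbarlot hfg] with a ha hlt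
    rw [hrep _ _ (hmenu a ha)]
    refine (sum_weighted_tieBreak_eq_zero hτreg (Finset.mem_union_left _ hgB) fun x => ?_).symm
    rwa [lt_iff_lt_of_posAffine (hposaff x x₀) (hmlot a ha) (hBlot g hgB)]
  · push Not at hbeat
    refine ⟨1, Or.inr rfl, tendsto_const_nhds.congr' ?_⟩
    filter_upwards [self_mem_nhdsWithin] with a ha
    rw [hrep _ _ (hmenu a ha)]
    refine (sum_weighted_tieBreak_eq_one hw1 hτreg
      (fun x => hτ1 x _ ⟨_, hmmem a⟩ (hmenu a ha)) (hmmem a) fun x g hg hgm => ?_).symm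
    have hgB : g ∈ B := by simpa [hgm] using hg
    rw [lt_iff_lt_of_posAffine (hposaff x x₀) (hBlot g hgB) (hmlot a ha)]
    exact lt_utility_mix_of_le (haff x₀) hflot hfbarlot (hBlot g hgB) (hbest x₀)
      (hbeat g hgB) ha hgm

/-- If an aSCF has an AS-version R-SEU representation with a best constant act and all
Bernoulli utilities positive affine transformations of one another, then it satisfies
C-Determinism*: on menus of constant acts (identified with menus of lotteries), the
choice probability of the mixture `a f + (1−a) f̄` in the perturbed menu tends to 0 or
1 as `a → 1⁻`. -/
theorem c_determinism_star
    {Z X : Type*} [Fintype X]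
    (w : X → ℝ) (hw : ∀ x, 0 < w x) (hw1 : ∑ x, w x = 1)
    (u : X → (Z →₀ ℝ) → ℝ) (haff : ∀ x, IsAffineOnLotteries (u x))
    -- all Bernoulli utilities are positive affine transformations of one another
    (hposaff : ∀ x y, ∃ a : ℝ, 0 < a ∧ ∃ b : ℝ, ∀ p, IsLottery p → u x p = a * u y p + b)
    -- regular tie-breakers
    (τ : X → (Z →₀ ℝ) → Finset (Z →₀ ℝ) → ℝ)
    (hτreg : ∀ x p A, τ x p A ≠ 0 → p ∈ A ∧ ∀ r ∈ A, u x r ≤ u x p)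
    (hτ1 : ∀ x (A : Finset (Z →₀ ℝ)), A.Nonempty → (∀ r ∈ A, IsLottery r) →
      ∑ p ∈ A, τ x p A = 1)
    -- the marginal stochastic choice function and its representation
    (ρ : (Z →₀ ℝ) → Finset (Z →₀ ℝ) → ℝ)
    (hrep : ∀ p (A : Finset (Z →₀ ℝ)), (∀ r ∈ A, IsLottery r) →
      ρ p A = ∑ x, w x * τ x p A)
    -- the best constant act
    (fbar : Z →₀ ℝ) (hfbarlot : IsLottery fbar)
    (hbest : ∀ x p, IsLottery p → p ≠ fbar → u x p < u x fbar) :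
    ∀ A : Finset (Z →₀ ℝ), A.Nonempty → (∀ r ∈ A, IsLottery r) → ∀ f ∈ A,
      ∃ c : ℝ, (c = 0 ∨ c = 1) ∧
        Tendsto (fun a : ℝ =>
            ρ (a • f + (1 - a) • fbar) ((A.erase f) ∪ {a • f + (1 - a) • fbar}))
          (nhdsWithin 1 (Set.Ico (0 : ℝ) 1)) (nhds c) :=
  c_determinism_star_general w hw1 u haff hposaff τ hτreg hτ1 ρ hrep fbar hfbarlot hbest
end
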